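/- arXiv:2109.03911 — 3 statements merged into one kernel-verified Lean document; each statement's English description precedes it below -/
import Mathlib

section
/- Let K ⊆ L be differential fields of characteristic 0 with the same field of constants C (so the constants of L equal the constants of K). Let A be an n×n matrix over K, let Z be an invertible n×n matrix over L whose columns are solutions of ∂Y = AY (equivalently ∂Z = AZ entrywise), and assume L is generated as a field over K by the entries of Z. Then for every differential automorphism σ of L over K (a field automorphism of L commuting with the derivation and fixing K pointwise), the matrix c_σ := Z⁻¹·σ(Z) has all entries in C and lies in GL_n(C), and the map σ ↦ c_σ is an injective group homomorphism from the group of differential automorphisms of L over K into GL_n(C). -/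
open scoped BigOperators

/-- The Picard–Vessiot Galois embedding (Section 5 of the paper).  Let `K ⊆ L` be
differential fields of characteristic 0 with the same constants `C = {x | D x = 0}`
(so all constants lie in `K`), let `A` be an `n × n` matrix with entries in `K`,
let `Z` be an invertible `n × n` matrix over `L` whose columns solve `D Y = A Y`
(i.e. `D Z = A Z` entrywise), and suppose `L` is generated as a field over `K` by
the entries of `Z`.  Then for every differential automorphism `σ` of `L` over `K`
(ring automorphism commuting with `D` and fixing `K` pointwise), the matrix
`c_σ = Z⁻¹ · σ(Z)` has constant entries and is invertible (so lies in `GLₙ(C)`),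
the assignment `σ ↦ c_σ` is a group homomorphism (`c_{σ·τ} = c_σ · c_τ`, where the
product of automorphisms is composition), and it is injective. -/
theorem picard_vessiot_galois_embedding {L : Type*} [Field L] [CharZero L]
    (D : L → L) (hadd : ∀ x y : L, D (x + y) = D x + D y)
    (hmul : ∀ x y : L, D (x * y) = x * D y + y * D x)
    (K : Subfield L) (hKD : ∀ x ∈ K, D x ∈ K)
    (hconst : ∀ x : L, D x = 0 → x ∈ K)
    (n : ℕ) (hn : 0 < n) (A : Matrix (Fin n) (Fin n) L) (hA : ∀ i j, A i j ∈ K)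
    (Z : Matrix (Fin n) (Fin n) L) (hZunit : IsUnit Z.det)
    (hZsol : ∀ i j, D (Z i j) = ∑ l, A i l * Z l j)
    (hgen : Subfield.closure ((K : Set L) ∪ {x : L | ∃ i j, x = Z i j}) = ⊤) :
    -- `c_σ := Z⁻¹ * Z.map ⇑σ` has constant entries and is invertible:
    (∀ σ : L ≃+* L, (∀ x : L, σ (D x) = D (σ x)) → (∀ x ∈ K, σ x = x) →
      (∀ i j, D ((Z⁻¹ * Z.map ⇑σ) i j) = 0) ∧ IsUnit (Z⁻¹ * Z.map ⇑σ).det) ∧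
    -- `σ ↦ c_σ` is multiplicative on differential automorphisms over `K`:
    (∀ σ τ : L ≃+* L,
      (∀ x : L, σ (D x) = D (σ x)) → (∀ x ∈ K, σ x = x) →
      (∀ x : L, τ (D x) = D (τ x)) → (∀ x ∈ K, τ x = x) →
      Z⁻¹ * Z.map ⇑(σ * τ) = (Z⁻¹ * Z.map ⇑σ) * (Z⁻¹ * Z.map ⇑τ)) ∧
    -- `σ ↦ c_σ` is injective on differential automorphisms over `K`:
    (∀ σ τ : L ≃+* L,
      (∀ x : L, σ (D x) = D (σ x)) → (∀ x ∈ K, σ x = x) →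
      (∀ x : L, τ (D x) = D (τ x)) → (∀ x ∈ K, τ x = x) →
      Z⁻¹ * Z.map ⇑σ = Z⁻¹ * Z.map ⇑τ → σ = τ) := by
  -- Basic derivation facts
  have hD0 : D 0 = 0 := by
    have h := hadd 0 0
    rw [add_zero] at h
    exact (left_eq_add.mp h)
  have hD1 : D 1 = 0 := by
    have h := hmul 1 1
    simp only [mul_one, one_mul] at h
    exact (left_eq_add.mp h)
  -- D as an additive monoid hom, to push through sums
  let Dh : L →+ L := AddMonoidHom.mk' D hadd
  have hDsum : ∀ (s : Finset (Fin n)) (f : Fin n → L),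
      D (∑ k ∈ s, f k) = ∑ k ∈ s, D (f k) := by
    intro s f
    exact map_sum Dh f s
  -- Entrywise derivative of matrices
  set Dm : Matrix (Fin n) (Fin n) L → Matrix (Fin n) (Fin n) L :=
    fun M => M.map D with hDm
  have hDmapp : ∀ M (i j : Fin n), Dm M i j = D (M i j) := fun M i j => rfl
  have hDmul : ∀ M N : Matrix (Fin n) (Fin n) L,
      Dm (M * N) = M * Dm N + Dm M * N := by
    intro M N
    ext i j
    simp only [hDmapp, Matrix.mul_apply, Matrix.add_apply, hDsum]
    rw [← Finset.sum_add_distrib]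
    congr 1
    ext k
    rw [hmul]
    ring
  have hDone : Dm 1 = 0 := by
    ext i j
    by_cases h : i = j <;> simp [hDmapp, Matrix.one_apply, h, hD0, hD1]
  have hZZ : Z * Z⁻¹ = 1 := Matrix.mul_nonsing_inv Z hZunit
  have hZZ' : Z⁻¹ * Z = 1 := Matrix.nonsing_inv_mul Z hZunit
  have hDZ : Dm Z = A * Z := by
    ext i j
    simp [hDmapp, Matrix.mul_apply, hZsol]
  have hDZinv : Dm Z⁻¹ = -(Z⁻¹ * A) := by
    have h := hDmul Z⁻¹ Z
    rw [hZZ', hDone, hDZ] at h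
    have h2 : Dm Z⁻¹ * Z = -(Z⁻¹ * (A * Z)) :=
      eq_neg_of_add_eq_zero_right h.symm
    calc Dm Z⁻¹ = Dm Z⁻¹ * Z * Z⁻¹ := by rw [mul_assoc, hZZ, mul_one]
    _ = -(Z⁻¹ * (A * Z)) * Z⁻¹ := by rw [h2]
    _ = -(Z⁻¹ * A) := by rw [neg_mul, ← mul_assoc, mul_assoc (Z⁻¹ * A), hZZ, mul_one]
  -- Main facts for a single differential automorphism σ over K
  have main : ∀ σ : L ≃+* L, (∀ x : L, σ (D x) = D (σ x)) → (∀ x ∈ K, σ x = x) →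
      (∀ i j, D ((Z⁻¹ * Z.map ⇑σ) i j) = 0) ∧ IsUnit (Z⁻¹ * Z.map ⇑σ).det ∧
        Z.map ⇑σ = Z * (Z⁻¹ * Z.map ⇑σ) := by
    intro σ hσD hσK
    have hDσZ : Dm (Z.map ⇑σ) = A * Z.map ⇑σ := by
      ext i j
      simp only [hDmapp, Matrix.map_apply, Matrix.mul_apply]
      rw [← hσD, hZsol, map_sum]
      congr 1
      ext l
      rw [map_mul, hσK _ (hA i l)]
    have hDc : Dm (Z⁻¹ * Z.map ⇑σ) = 0 := by
      rw [hDmul, hDσZ, hDZinv, neg_mul, ← mul_assoc, add_neg_cancel]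
    constructor
    · intro i j
      have := congrFun (congrFun hDc i) j
      simpa [hDmapp] using this
    constructor
    · rw [Matrix.det_mul]
      have h1 : IsUnit (Z⁻¹).det := Matrix.isUnit_nonsing_inv_det Z hZunit
      have h2 : IsUnit (Z.map ⇑σ).det := by
        show IsUnit (σ.toRingHom.mapMatrix Z).det
        rw [← RingHom.map_det]
        exact hZunit.map σ.toRingHom
      exact h1.mul h2
    · rw [← mul_assoc, hZZ, one_mul]
  refine ⟨fun σ h1 h2 => ⟨(main σ h1 h2).1, (main σ h1 h2).2.1⟩, ?_, ?_⟩
  · -- multiplicativity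
    intro σ τ hσD hσK hτD hτK
    have hcτK : ∀ i j, (Z⁻¹ * Z.map ⇑τ) i j ∈ K :=
      fun i j => hconst _ ((main τ hτD hτK).1 i j)
    have hmap : Z.map ⇑(σ * τ) = (Z.map ⇑τ).map ⇑σ := by
      rw [Matrix.map_map]; rfl
    have hfix : (Z⁻¹ * Z.map ⇑τ).map ⇑σ = Z⁻¹ * Z.map ⇑τ := by
      ext i j
      exact hσK _ (hcτK i j)
    have key : (Z.map ⇑τ).map ⇑σ = Z.map ⇑σ * (Z⁻¹ * Z.map ⇑τ) := by
      conv_lhs => rw [(main τ hτD hτK).2.2]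
      calc (Z * (Z⁻¹ * Z.map ⇑τ)).map ⇑σ
          = (Z * (Z⁻¹ * Z.map ⇑τ)).map ⇑σ.toRingHom := rfl
        _ = Z.map ⇑σ.toRingHom * (Z⁻¹ * Z.map ⇑τ).map ⇑σ.toRingHom := Matrix.map_mul
        _ = Z.map ⇑σ * (Z⁻¹ * Z.map ⇑τ) := by rw [show (Z⁻¹ * Z.map ⇑τ).map ⇑σ.toRingHom = Z⁻¹ * Z.map ⇑τ from hfix]; rfl
    rw [hmap, key, ← mul_assoc]
  · -- injectivity
    intro σ τ hσD hσK hτD hτK hc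
    have hZeq : Z.map ⇑σ = Z.map ⇑τ := by
      rw [(main σ hσD hσK).2.2, (main τ hτD hτK).2.2, hc]
    have hentry : ∀ i j, σ (Z i j) = τ (Z i j) := by
      intro i j
      have := congrFun (congrFun hZeq i) j
      simpa [Matrix.map_apply] using this
    have hsub : ((K : Set L) ∪ {x : L | ∃ i j, x = Z i j}) ⊆
        ↑(RingHom.eqLocusField σ.toRingHom τ.toRingHom) := by
      rintro x (hx | ⟨i, j, rfl⟩)
      · show σ x = τ x
        rw [hσK x hx, hτK x hx]
      · exact hentry i j
    have htop : (⊤ : Subfield L) ≤ RingHom.eqLocusField σ.toRingHom τ.toRingHom := by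
      rw [← hgen]
      exact Subfield.closure_le.mpr hsub
    ext x
    exact htop (Subfield.mem_top x)
end

section
/- Let α be any type and let x, y be elements of the free group FreeGroup α. If xⁿ = yⁿ for some integer n ≥ 1, then x = y. In particular, elements of a free group have unique square roots. -/
open Finset

namespace FreeGroupRoots

variable {R : Type*} [CommRing R] {s : ℕ}

/-- `Pd d c` : the matrix `c` vanishes at entries `(i,j)` with `j < i + d`,
i.e. `c` is supported on diagonals at distance `≥ d` above the main diagonal. -/
def Pd (d : ℕ) (c : Matrix (Fin s) (Fin s) R) : Prop :=
  ∀ i j : Fin s, (j : ℕ) < (i : ℕ) + d → c i j = 0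

lemma Pd.add {d : ℕ} {c₁ c₂ : Matrix (Fin s) (Fin s) R} (h₁ : Pd d c₁) (h₂ : Pd d c₂) :
    Pd d (c₁ + c₂) := by
  intro i j hj
  simp [Matrix.add_apply, h₁ i j hj, h₂ i j hj]

lemma Pd.mono' {d e : ℕ} (hde : d ≤ e) {c : Matrix (Fin s) (Fin s) R} (h : Pd e c) : Pd d c := by
  intro i j hj
  exact h i j (lt_of_lt_of_le hj (by omega))

lemma Pd.sub {d : ℕ} {c₁ c₂ : Matrix (Fin s) (Fin s) R} (h₁ : Pd d c₁) (h₂ : Pd d c₂) :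
    Pd d (c₁ - c₂) := by
  intro i j hj
  simp [Matrix.sub_apply, h₁ i j hj, h₂ i j hj]

lemma Pd.neg {d : ℕ} {c : Matrix (Fin s) (Fin s) R} (h : Pd d c) : Pd d (-c) := by
  intro i j hj
  simp [Matrix.neg_apply, h i j hj]

lemma Pd.sum {d : ℕ} {ι : Type*} (t : Finset ι) (f : ι → Matrix (Fin s) (Fin s) R)
    (h : ∀ i ∈ t, Pd d (f i)) : Pd d (∑ i ∈ t, f i) := by
  intro i j hj
  rw [Matrix.sum_apply]
  exact Finset.sum_eq_zero fun k hk => h k hk i j hj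

lemma Pd.mul {p q : ℕ} {c₁ c₂ : Matrix (Fin s) (Fin s) R} (h₁ : Pd p c₁) (h₂ : Pd q c₂) :
    Pd (p + q) (c₁ * c₂) := by
  intro i j hj
  rw [Matrix.mul_apply]
  apply Finset.sum_eq_zero
  intro k _
  by_cases hk : (k : ℕ) < (i : ℕ) + p
  · rw [h₁ i k hk, zero_mul]
  · rw [h₂ k j (by omega), mul_zero]

lemma Pd.pow' {a : Matrix (Fin s) (Fin s) R} (h : Pd 1 a) (k : ℕ) : Pd 1 (a ^ (k + 1)) := by
  induction k with
  | zero => simpa using h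
  | succ k ih =>
    rw [_root_.pow_succ]
    exact (ih.mul h).mono' (by omega)

lemma Pd.pow_sub_pow {a b : Matrix (Fin s) (Fin s) R} (ha : Pd 1 a) (hb : Pd 1 b) {d : ℕ}
    (hd : Pd d (a - b)) (k : ℕ) : Pd (d + 1) (a ^ (k + 2) - b ^ (k + 2)) := by
  induction k with
  | zero =>
    have e : a ^ 2 - b ^ 2 = a * (a - b) + (a - b) * b := by noncomm_ring
    rw [e]
    exact ((ha.mul hd).mono' (by omega)).add ((hd.mul hb).mono' (by omega))
  | succ k ih =>
    have e : a ^ (k + 3) - b ^ (k + 3)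
        = a ^ (k + 2) * (a - b) + (a ^ (k + 2) - b ^ (k + 2)) * b := by
      rw [_root_.pow_succ a (k + 2), _root_.pow_succ b (k + 2)]
      noncomm_ring
    rw [e]
    have h1 : Pd (d + 1) (a ^ (k + 2) * (a - b)) :=
      ((ha.pow' (k + 1)).mul hd).mono' (by omega)
    have h2 : Pd (d + 1) ((a ^ (k + 2) - b ^ (k + 2)) * b) :=
      (ih.mul hb).mono' (by omega)
    exact h1.add h2

lemma Pd.natCast (k : ℕ) : Pd (R := R) (s := s) 0 (k : Matrix (Fin s) (Fin s) R) := by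
  intro i j hj
  have hij : i ≠ j := by
    intro hh; rw [hh] at hj; omega
  rw [← Matrix.diagonal_natCast, Matrix.diagonal_apply_ne _ hij]

theorem unitriangular_pow_inj [IsDomain R] [CharZero R] {a b : Matrix (Fin s) (Fin s) R}
    (ha : Pd 1 a) (hb : Pd 1 b) {n : ℕ} (hn : 1 ≤ n) (h : (1 + a) ^ n = (1 + b) ^ n) : a = b := by
  obtain ⟨n₀, rfl⟩ : ∃ n₀, n = n₀ + 1 := ⟨n - 1, by omega⟩
  -- binomial expansions
  have expand : ∀ c : Matrix (Fin s) (Fin s) R,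
      (1 + c) ^ (n₀ + 1) = ∑ k ∈ Finset.range (n₀ + 2), c ^ k * ((n₀ + 1).choose k : Matrix (Fin s) (Fin s) R) := by
    intro c
    rw [add_comm (1 : Matrix (Fin s) (Fin s) R) c, (Commute.one_right c).add_pow]
    simp [one_pow]
  have key : ∀ d : ℕ, Pd (d + 1) (a - b) := by
    intro d
    induction d with
    | zero => exact ha.sub hb
    | succ d ih =>
      have hsum : (0 : Matrix (Fin s) (Fin s) R)
          = ∑ k ∈ Finset.range (n₀ + 2), (a ^ k - b ^ k) * ((n₀ + 1).choose k : Matrix (Fin s) (Fin s) R) := by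
        have hh := h
        rw [expand a, expand b, ← sub_eq_zero, ← Finset.sum_sub_distrib] at hh
        rw [← hh]
        apply Finset.sum_congr rfl
        intro k _
        rw [sub_mul]
      -- peel off the k = 0 and k = 1 terms
      set f : ℕ → Matrix (Fin s) (Fin s) R :=
        fun k => (a ^ k - b ^ k) * ((n₀ + 1).choose k : Matrix (Fin s) (Fin s) R) with hf
      have hpeel : (0 : Matrix (Fin s) (Fin s) R)
          = (∑ i ∈ Finset.range n₀, f (i + 2)) + f 1 + f 0 := by
        rw [hsum]
        rw [Finset.sum_range_succ' f (n₀ + 1), Finset.sum_range_succ' (fun i => f (i + 1)) n₀]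
      have hf0 : f 0 = 0 := by simp [hf]
      have hf1 : f 1 = (a - b) * ((n₀ + 1 : ℕ) : Matrix (Fin s) (Fin s) R) := by
        simp [hf]
      have hmain : (a - b) * ((n₀ + 1 : ℕ) : Matrix (Fin s) (Fin s) R)
          = -∑ i ∈ Finset.range n₀, f (i + 2) := by
        rw [← hf1]
        have := hpeel
        rw [hf0, add_zero] at this
        linear_combination (norm := noncomm_ring) -this
      have hrhs : Pd (d + 2) (-∑ i ∈ Finset.range n₀, f (i + 2)) := by
        apply Pd.neg
        apply Pd.sum
        intro k _
        have h1 : Pd (d + 2) (a ^ (k + 2) - b ^ (k + 2)) := ha.pow_sub_pow hb ih k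
        have := h1.mul (Pd.natCast (R := R) (s := s) ((n₀ + 1).choose (k + 2)))
        simpa using this
      intro i j hj
      have hz : ((a - b) * ((n₀ + 1 : ℕ) : Matrix (Fin s) (Fin s) R)) i j = 0 := by
        rw [hmain]; exact hrhs i j hj
      have hentry : ((a - b) * ((n₀ + 1 : ℕ) : Matrix (Fin s) (Fin s) R)) i j
          = (a - b) i j * ((n₀ + 1 : ℕ) : R) := by
        rw [← Matrix.diagonal_natCast, Matrix.mul_diagonal]
      rw [hentry] at hz
      rcases mul_eq_zero.1 hz with h' | h'
      · exact h'
      · exact absurd h' (Nat.cast_ne_zero.2 (Nat.succ_ne_zero n₀))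
  have hfin : Pd (s + 1) (a - b) := key s
  ext i j
  have hz : (a - b) i j = 0 := hfin i j (by omega)
  rw [Matrix.sub_apply] at hz
  exact sub_eq_zero.1 hz

section Representation

attribute [local instance] Classical.propDecidable

open MvPolynomial

variable {β : Type*} (W : List (β × Bool))

/-- Superdiagonal "Magnus" matrix attached to the letter `c`: it has entry `Xᵢ` at
position `(i, i+1)` whenever the `i`-th letter of the word `W` is `c`. -/
noncomputable def Nmat (c : β) :
    Matrix (Fin (W.length + 1)) (Fin (W.length + 1)) (MvPolynomial ℕ ℤ) :=
  fun i j =>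
    if (j : ℕ) = (i : ℕ) + 1 ∧ ∃ h : (i : ℕ) < W.length, (W[(i : ℕ)]'h).1 = c then
      MvPolynomial.X (i : ℕ)
    else 0

lemma Nmat_mul_self (hW : List.Chain' (fun p q => p.1 ≠ q.1) W) (c : β) :
    Nmat W c * Nmat W c = 0 := by
  apply Matrix.ext
  intro i j
  rw [Matrix.mul_apply, Matrix.zero_apply]
  apply Finset.sum_eq_zero
  intro k _
  unfold Nmat
  rcases Classical.em ((k : ℕ) = (i : ℕ) + 1 ∧ ∃ h : (i : ℕ) < W.length, (W[(i : ℕ)]'h).1 = c)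
    with h1 | h1
  · rcases Classical.em ((j : ℕ) = (k : ℕ) + 1 ∧ ∃ h : (k : ℕ) < W.length, (W[(k : ℕ)]'h).1 = c)
      with h2 | h2
    · obtain ⟨hk, hi, hic⟩ := h1
      obtain ⟨hj, hk', hkc⟩ := h2
      exfalso
      have hlt : (i : ℕ) < W.length - 1 := by omega
      have hc := List.isChain_iff_getElem.1 hW (i : ℕ) (by omega)
      apply hc
      simp only [hic]
      have hik : W[(i : ℕ) + 1]'(by omega) = W[(k : ℕ)]'hk' := by
        congr 1
        omega
      rw [hik]
      exact hkc.symm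
    · rw [if_neg h2, mul_zero]
  · rw [if_neg h1, zero_mul]

lemma Nmat_strict (c : β) {i j : Fin (W.length + 1)} (h : (j : ℕ) ≤ i) : Nmat W c i j = 0 := by
  unfold Nmat
  rw [if_neg]
  rintro ⟨h1, -⟩
  omega

/-- The unit `1 + Nmat W c` of the matrix ring. -/
noncomputable def Umat (hW : List.Chain' (fun p q => p.1 ≠ q.1) W) (c : β) :
    (Matrix (Fin (W.length + 1)) (Fin (W.length + 1)) (MvPolynomial ℕ ℤ))ˣ where
  val := 1 + Nmat W c
  inv := 1 - Nmat W c
  val_inv := by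
    have h := Nmat_mul_self W hW c
    have e : (1 + Nmat W c) * (1 - Nmat W c) = 1 - Nmat W c * Nmat W c := by noncomm_ring
    rw [e, h, sub_zero]
  inv_val := by
    have h := Nmat_mul_self W hW c
    have e : (1 - Nmat W c) * (1 + Nmat W c) = 1 - Nmat W c * Nmat W c := by noncomm_ring
    rw [e, h, sub_zero]

/-- The Magnus representation of the free group attached to the word `W`. -/
noncomputable def rep (hW : List.Chain' (fun p q => p.1 ≠ q.1) W) : FreeGroup β →*
    (Matrix (Fin (W.length + 1)) (Fin (W.length + 1)) (MvPolynomial ℕ ℤ))ˣ :=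
  FreeGroup.lift fun c => Umat W hW c

/-- "Agrees with `1` on the lower triangle including the diagonal". -/
def SL (A : Matrix (Fin (W.length + 1)) (Fin (W.length + 1)) (MvPolynomial ℕ ℤ)) : Prop :=
  ∀ i j : Fin (W.length + 1), (j : ℕ) ≤ (i : ℕ) →
    A i j = (1 : Matrix (Fin (W.length + 1)) (Fin (W.length + 1)) (MvPolynomial ℕ ℤ)) i j

lemma SL.one : SL W (1 : Matrix (Fin (W.length + 1)) (Fin (W.length + 1)) (MvPolynomial ℕ ℤ)) :=
  fun _ _ _ => rfl

lemma SL.mul {A B : Matrix (Fin (W.length + 1)) (Fin (W.length + 1)) (MvPolynomial ℕ ℤ)}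
    (hA : SL W A) (hB : SL W B) : SL W (A * B) := by
  intro i j hij
  rw [Matrix.mul_apply]
  rw [Finset.sum_eq_single i]
  · rw [hA i i le_rfl, Matrix.one_apply_eq, one_mul]
    exact hB i j hij
  · intro k _ hk
    by_cases hki : (k : ℕ) ≤ (i : ℕ)
    · rw [hA i k hki, Matrix.one_apply_ne (by simpa [eq_comm] using hk), zero_mul]
    · have hkj : k ≠ j := by intro h; subst h; omega
      rw [hB k j (by omega), Matrix.one_apply_ne hkj, mul_zero]
  · intro h
    exact absurd (Finset.mem_univ i) h

lemma SL.addN (c : β) : SL W (1 + Nmat W c) := by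
  intro i j hij
  rw [Matrix.add_apply, Nmat_strict W c hij, add_zero]

lemma SL.subN (c : β) : SL W (1 - Nmat W c) := by
  intro i j hij
  rw [Matrix.sub_apply, Nmat_strict W c hij, sub_zero]

lemma rep_SL (hW : List.Chain' (fun p q => p.1 ≠ q.1) W) (g : FreeGroup β) :
    SL W ((rep W hW g).val) ∧ SL W (((rep W hW g)⁻¹).val) := by
  refine FreeGroup.induction_on g ?_ ?_ ?_ ?_
  · rw [map_one, inv_one]
    exact ⟨SL.one W, SL.one W⟩
  · intro x
    constructor
    · show SL W ((rep W hW (FreeGroup.of x)).val)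
      rw [rep, FreeGroup.lift_apply_of]
      exact SL.addN W x
    · show SL W (((rep W hW (FreeGroup.of x))⁻¹).val)
      rw [rep, FreeGroup.lift_apply_of]
      exact SL.subN W x
  · intro x h
    exact ⟨by rw [map_inv]; exact h.2, by rw [map_inv, inv_inv]; exact h.1⟩
  · intro x y hx hy
    constructor
    · rw [map_mul, Units.val_mul]
      exact SL.mul W hx.1 hy.1
    · rw [map_mul, mul_inv_rev, Units.val_mul]
      exact SL.mul W hy.2 hx.2

lemma rep_take (hW : List.Chain' (fun p q => p.1 ≠ q.1) W) :
    ∀ k (hk : k ≤ W.length),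
      (∀ j : Fin (W.length + 1), k < (j : ℕ) →
        ((rep W hW) (FreeGroup.mk (W.take k))).val 0 j = 0) ∧
      ((rep W hW) (FreeGroup.mk (W.take k))).val 0 ⟨k, by omega⟩ ≠ 0 := by
  intro k
  induction k with
  | zero =>
    intro _
    rw [List.take_zero, ← FreeGroup.one_eq_mk, map_one]
    constructor
    · intro j hj
      exact Matrix.one_apply_ne (by intro h; rw [← h] at hj; simp at hj)
    · show (1 : Matrix (Fin (W.length + 1)) (Fin (W.length + 1)) (MvPolynomial ℕ ℤ)) 0 ⟨0, by omega⟩ ≠ 0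
      rw [show (⟨0, by omega⟩ : Fin (W.length + 1)) = 0 from rfl, Matrix.one_apply_eq]
      exact one_ne_zero
  | succ k ih =>
    intro hk1
    have hk : k ≤ W.length := by omega
    have hklt : k < W.length := by omega
    obtain ⟨ih1, ih2⟩ := ih hk
    -- decompose the word
    have htake : W.take (k + 1) = W.take k ++ [W[k]'hklt] := by
      rw [← List.take_concat_get' W k hklt]
    set w := W[k]'hklt with hw
    have hmk : FreeGroup.mk (W.take (k + 1))
        = FreeGroup.mk (W.take k) * FreeGroup.mk [w] := by
      rw [FreeGroup.mul_mk, htake]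
    set A := ((rep W hW) (FreeGroup.mk (W.take k))).val with hA
    -- the last factor
    have hfactor : ((rep W hW) (FreeGroup.mk [w])).val
        = if w.2 then 1 + Nmat W w.1 else 1 - Nmat W w.1 := by
      cases hw2 : w.2 with
      | true =>
        have : FreeGroup.mk [w] = FreeGroup.of w.1 := by
          rw [FreeGroup.of]
          congr 1
          rw [show w = (w.1, w.2) from rfl, hw2]
        rw [this, if_pos rfl]
        show ((rep W hW) (FreeGroup.of w.1)).val = _
        rw [rep, FreeGroup.lift_apply_of]
        rfl
      | false =>
        have : FreeGroup.mk [w] = (FreeGroup.of w.1)⁻¹ := by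
          rw [FreeGroup.of, FreeGroup.inv_mk]
          congr 1
          rw [show w = (w.1, w.2) from rfl, hw2]
          rfl
        rw [this, if_neg (by simp)]
        rw [map_inv, rep, FreeGroup.lift_apply_of]
        rfl
    -- key entry computations for A * Nmat W w.1
    have hAN_zero : ∀ j : Fin (W.length + 1), k + 1 < (j : ℕ) →
        (A * Nmat W w.1) 0 j = 0 := by
      intro j hj
      rw [Matrix.mul_apply]
      apply Finset.sum_eq_zero
      intro t _
      unfold Nmat
      rcases Classical.em ((j : ℕ) = (t : ℕ) + 1 ∧ ∃ h : (t : ℕ) < W.length,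
          (W[(t : ℕ)]'h).1 = w.1) with h1 | h1
      · rw [if_pos h1]
        have : k < (t : ℕ) := by omega
        rw [ih1 t this, zero_mul]
      · rw [if_neg h1, mul_zero]
    have hAN_corner : (A * Nmat W w.1) 0 ⟨k + 1, by omega⟩
        = A 0 ⟨k, by omega⟩ * MvPolynomial.X (k : ℕ) := by
      rw [Matrix.mul_apply]
      rw [Finset.sum_eq_single (⟨k, by omega⟩ : Fin (W.length + 1))]
      · congr 1
        unfold Nmat
        rw [if_pos]
        exact ⟨rfl, hklt, rfl⟩
      · intro t _ ht
        unfold Nmat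
        rw [if_neg, mul_zero]
        rintro ⟨h1, -⟩
        apply ht
        apply Fin.ext
        show (t : ℕ) = k
        simpa using h1.symm
      · intro h
        exact absurd (Finset.mem_univ _) h
    -- now put things together
    have hval : ((rep W hW) (FreeGroup.mk (W.take (k + 1)))).val
        = if w.2 then A + A * Nmat W w.1 else A - A * Nmat W w.1 := by
      rw [hmk, map_mul, Units.val_mul, ← hA, hfactor]
      cases w.2
      · rw [if_neg (by simp), if_neg (by simp), mul_sub, mul_one]
      · rw [if_pos rfl, if_pos rfl, mul_add, mul_one]
    constructor
    · intro j hj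
      rw [hval]
      have hz1 : A 0 j = 0 := ih1 j (by omega)
      have hz2 : (A * Nmat W w.1) 0 j = 0 := hAN_zero j hj
      cases w.2
      · rw [if_neg (by simp), Matrix.sub_apply, hz1, hz2, sub_zero]
      · rw [if_pos rfl, Matrix.add_apply, hz1, hz2, add_zero]
    · rw [hval]
      have hz1 : A 0 ⟨k + 1, by omega⟩ = 0 := ih1 _ (by simp)
      have hmain : A 0 ⟨k, by omega⟩ * MvPolynomial.X (k : ℕ) ≠ 0 :=
        mul_ne_zero ih2 (MvPolynomial.X_ne_zero _)
      cases w.2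
      · rw [if_neg (by simp), Matrix.sub_apply, hz1, hAN_corner, zero_sub]
        exact neg_ne_zero.2 hmain
      · rw [if_pos rfl, Matrix.add_apply, hz1, hAN_corner, zero_add]
        exact hmain

end Representation

section Doubling

variable {α : Type*}

/-- Double each letter: `a ↦ (inl a)(inr a)`, `a⁻¹ ↦ (inr a)⁻¹(inl a)⁻¹`.  The resulting
word never has two adjacent equal letters when the original word is reduced. -/
def dbl : List (α × Bool) → List ((α ⊕ α) × Bool)
  | [] => []
  | (a, true) :: L => (Sum.inl a, true) :: (Sum.inr a, true) :: dbl L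
  | (a, false) :: L => (Sum.inr a, false) :: (Sum.inl a, false) :: dbl L

/-- The doubling homomorphism. -/
def dblHom : FreeGroup α →* FreeGroup (α ⊕ α) :=
  FreeGroup.lift fun a => FreeGroup.of (Sum.inl a) * FreeGroup.of (Sum.inr a)

lemma mk_dbl : ∀ L : List (α × Bool), FreeGroup.mk (dbl L) = dblHom (FreeGroup.mk L)
  | [] => by
    show FreeGroup.mk [] = dblHom (FreeGroup.mk [])
    rw [show FreeGroup.mk ([] : List ((α ⊕ α) × Bool)) = 1 from FreeGroup.one_eq_mk.symm,
      show FreeGroup.mk ([] : List (α × Bool)) = 1 from FreeGroup.one_eq_mk.symm, map_one]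
  | (a, b) :: t => by
    have ht : FreeGroup.mk ((a, b) :: t) = FreeGroup.mk [(a, b)] * FreeGroup.mk t := by
      rw [FreeGroup.mul_mk]; rfl
    cases b
    · show FreeGroup.mk ((Sum.inr a, false) :: (Sum.inl a, false) :: dbl t) = _
      have e1 : FreeGroup.mk ((Sum.inr a, false) :: (Sum.inl a, false) :: dbl t)
          = FreeGroup.mk [(Sum.inr a, false), (Sum.inl a, false)] * FreeGroup.mk (dbl t) := by
        rw [FreeGroup.mul_mk]; rfl
      have e2 : FreeGroup.mk [(a, false)] = (FreeGroup.of a)⁻¹ := by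
        rw [FreeGroup.of, FreeGroup.inv_mk]; rfl
      have e3 : FreeGroup.mk [(Sum.inr a, false), (Sum.inl a, false)]
          = (FreeGroup.of (Sum.inl a) * FreeGroup.of (Sum.inr a))⁻¹ := by
        rw [mul_inv_rev, FreeGroup.of, FreeGroup.of, FreeGroup.inv_mk, FreeGroup.inv_mk,
          FreeGroup.mul_mk]
        rfl
      rw [e1, e3, mk_dbl t, ht, map_mul, e2, map_inv, dblHom, FreeGroup.lift_apply_of]
    · show FreeGroup.mk ((Sum.inl a, true) :: (Sum.inr a, true) :: dbl t) = _
      have e1 : FreeGroup.mk ((Sum.inl a, true) :: (Sum.inr a, true) :: dbl t)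
          = FreeGroup.mk [(Sum.inl a, true), (Sum.inr a, true)] * FreeGroup.mk (dbl t) := by
        rw [FreeGroup.mul_mk]; rfl
      have e3 : FreeGroup.mk [(Sum.inl a, true), (Sum.inr a, true)]
          = FreeGroup.of (Sum.inl a) * FreeGroup.of (Sum.inr a) := by
        rw [FreeGroup.of, FreeGroup.of, FreeGroup.mul_mk]
        rfl
      rw [e1, e3, mk_dbl t, ht, map_mul]
      have e2 : FreeGroup.mk [(a, true)] = FreeGroup.of a := rfl
      rw [e2, dblHom, FreeGroup.lift_apply_of]

/-- A reduced word has no adjacent cancelling pair. -/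
lemma chain_of_reduce [DecidableEq α] : ∀ {L : List (α × Bool)}, FreeGroup.reduce L = L →
    List.Chain' (fun p q => ¬(p.1 = q.1 ∧ q.2 = !p.2)) L
  | [], _ => List.isChain_nil
  | x :: t, h => by
    rw [FreeGroup.reduce.cons] at h
    rcases hr : FreeGroup.reduce t with - | ⟨hd, tl⟩
    · rw [hr] at h
      have : t = [] := by
        have := h
        simpa using this.symm
      subst this
      exact List.isChain_singleton _
    · rw [hr] at h
      have h : (if x.1 = hd.1 ∧ x.2 = !hd.2 then tl else x :: hd :: tl) = x :: t := h
      by_cases hc : x.1 = hd.1 ∧ x.2 = !hd.2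
      · rw [if_pos hc] at h
        exfalso
        have hlen : (FreeGroup.reduce t).length ≤ t.length :=
          FreeGroup.Red.length_le FreeGroup.reduce.red
        rw [hr] at hlen
        have : tl.length = t.length + 1 := by rw [h]; rfl
        simp only [List.length_cons] at hlen
        omega
      · rw [if_neg hc] at h
        have hteq : t = hd :: tl := by
          have h' := h
          rw [List.cons.injEq] at h'
          exact h'.2.symm
        have hred : FreeGroup.reduce t = t := by rw [← hteq] at hr; exact hr
        have iht := chain_of_reduce hred
        rw [hteq] at iht ⊢
        exact List.isChain_cons_cons.2 ⟨fun hcon => hc ⟨hcon.1, by rw [hcon.2]; simp⟩, iht⟩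

lemma dbl_head? : ∀ L : List (α × Bool),
    (dbl L).head? = L.head?.map fun p => (cond p.2 (Sum.inl p.1) (Sum.inr p.1), p.2)
  | [] => rfl
  | (a, true) :: t => rfl
  | (a, false) :: t => rfl

lemma chain_dbl : ∀ {L : List (α × Bool)},
    List.Chain' (fun p q => ¬(p.1 = q.1 ∧ q.2 = !p.2)) L →
    List.Chain' (fun p q => p.1 ≠ q.1) (dbl L)
  | [], _ => List.isChain_nil
  | (a, b) :: t, h => by
    replace h := List.isChain_cons.1 h
    have iht := chain_dbl h.2
    have hhead : ∀ y ∈ (dbl t).head?, (cond b (Sum.inr a) (Sum.inl a) : α ⊕ α) ≠ y.1 := by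
      intro y hy
      rw [dbl_head? t] at hy
      rcases ht : t.head? with - | ⟨⟨c, pb⟩⟩
      · rw [ht] at hy; simp at hy
      · rw [ht] at hy
        have h1 := h.1 (c, pb) (by rw [ht]; rfl)
        have hy' : y = (cond pb (Sum.inl c) (Sum.inr c), pb) := by
          simpa using hy.symm
        subst hy'
        cases b <;> cases pb <;> simp only [cond_true, cond_false] <;> intro hcon
        · simp at hcon
        · exact h1 ⟨by simpa using hcon, by simp⟩
        · exact h1 ⟨by simpa using hcon, by simp⟩
        · simp at hcon
    cases b
    · show List.Chain' _ ((Sum.inr a, false) :: (Sum.inl a, false) :: dbl t)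
      refine List.isChain_cons_cons.2 ⟨by simp, ?_⟩
      exact List.IsChain.cons iht (by simpa using hhead)
    · show List.Chain' _ ((Sum.inl a, true) :: (Sum.inr a, true) :: dbl t)
      refine List.isChain_cons_cons.2 ⟨by simp, ?_⟩
      exact List.IsChain.cons iht (by simpa using hhead)

lemma dbl_ne_nil {L : List (α × Bool)} (h : L ≠ []) : dbl L ≠ [] := by
  match L with
  | [] => exact absurd rfl h
  | (a, true) :: t => simp [dbl]
  | (a, false) :: t => simp [dbl]

end Doubling

end FreeGroupRoots


open FreeGroupRoots

/-- In a free group, extraction of `n`-th roots (`n ≥ 1`) is unique: if `xⁿ = yⁿ`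
then `x = y`.  In particular elements of a free group have unique square roots. -/
theorem freeGroup_pow_injective {α : Type*} (x y : FreeGroup α) (n : ℕ) (hn : 1 ≤ n)
    (h : x ^ n = y ^ n) : x = y := by
  classical
  by_contra hxy
  set z := x * y⁻¹ with hzdef
  have hz : z ≠ 1 := by
    intro hone
    exact hxy (by rwa [hzdef, mul_inv_eq_one] at hone)
  set L := z.toWord with hLdef
  have hLred : FreeGroup.reduce L = L := FreeGroup.reduce_toWord z
  have hLne : L ≠ [] := fun hnil => hz (FreeGroup.toWord_eq_nil_iff.1 (hLdef ▸ hnil))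
  set W := dbl L with hWdef
  have hWchain : List.Chain' (fun p q => p.1 ≠ q.1) W :=
    chain_dbl (chain_of_reduce hLred)
  set ρ := rep W hWchain with hρ
  set A := (ρ (dblHom x)).val with hAdef
  set B := (ρ (dblHom y)).val with hBdef
  have hSLx := (rep_SL W hWchain (dblHom x)).1
  have hSLy := (rep_SL W hWchain (dblHom y)).1
  have hPa : Pd 1 (A - 1) := by
    intro i j hj
    rw [Matrix.sub_apply]
    exact sub_eq_zero.2 (hSLx i j (by omega))
  have hPb : Pd 1 (B - 1) := by
    intro i j hj
    rw [Matrix.sub_apply]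
    exact sub_eq_zero.2 (hSLy i j (by omega))
  have hpow0 : A ^ n = B ^ n := by
    have hφ : (ρ (dblHom (x ^ n))) = (ρ (dblHom (y ^ n))) := by rw [h]
    rw [map_pow, map_pow, map_pow, map_pow] at hφ
    calc A ^ n = ((ρ (dblHom x)) ^ n).val := (Units.val_pow_eq_pow_val _ _).symm
      _ = ((ρ (dblHom y)) ^ n).val := by rw [hφ]
      _ = B ^ n := Units.val_pow_eq_pow_val _ _
  have hpow : (1 + (A - 1)) ^ n = (1 + (B - 1)) ^ n := by
    have e1 : (1 : Matrix (Fin (W.length + 1)) (Fin (W.length + 1)) (MvPolynomial ℕ ℤ))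
        + (A - 1) = A := by abel
    have e2 : (1 : Matrix (Fin (W.length + 1)) (Fin (W.length + 1)) (MvPolynomial ℕ ℤ))
        + (B - 1) = B := by abel
    rw [e1, e2]
    exact hpow0
  have hAB : A - 1 = B - 1 := unitriangular_pow_inj hPa hPb hn hpow
  have hABval : A = B := by
    have := congrArg (fun M => M + 1) hAB
    simpa using this
  have hunit : ρ (dblHom x) = ρ (dblHom y) := Units.ext hABval
  have hone : ρ (dblHom z) = 1 := by
    rw [hzdef, map_mul, map_mul, map_inv, map_inv, hunit, mul_inv_cancel]
  have hcorner := (rep_take W hWchain W.length le_rfl).2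
  have hWz : FreeGroup.mk (W.take W.length) = dblHom z := by
    rw [List.take_length, hWdef, mk_dbl, hLdef, FreeGroup.mk_toWord]
  rw [hWz, ← hρ, hone] at hcorner
  apply hcorner
  have hm : W.length ≠ 0 := by
    intro h0
    exact dbl_ne_nil hLne (List.length_eq_zero_iff.1 (hWdef ▸ h0))
  show (1 : Matrix (Fin (W.length + 1)) (Fin (W.length + 1)) (MvPolynomial ℕ ℤ)) 0
      ⟨W.length, by omega⟩ = 0
  refine Matrix.one_apply_ne ?_
  intro hcon
  have : (0 : ℕ) = W.length := congrArg Fin.val hcon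
  omega
end

section
/- Every subgroup of finite index of the free group FreeGroup ℕ whose underlying set is definable with parameters in the L_grp-structure FreeGroup ℕ is equal to the whole group. That is, FreeGroup ℕ has no proper definable subgroup of finite index. -/
open FirstOrder

/-- Function symbols of the first-order language of groups: a binary multiplication,
a unary inversion, and a constant for the identity. -/
inductive GrpFunc : ℕ → Type
  | mul : GrpFunc 2
  | inv : GrpFunc 1
  | one : GrpFunc 0

/-- The first-order language of groups. -/
def Lgrp : FirstOrder.Language :=
  ⟨GrpFunc, fun _ => Empty⟩

/-- Every group is an `Lgrp`-structure in the natural way. -/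
instance (G : Type*) [Group G] : Lgrp.Structure G where
  funMap {_} f args :=
    match f with
    | .mul => args 0 * args 1
    | .inv => (args 0)⁻¹
    | .one => 1
  RelMap {_} r _ := r.elim

/-- A group isomorphism is an `Lgrp`-equivalence. -/
def mulEquivToLgrpEquiv {G : Type*} [Group G] (f : G ≃* G) : Lgrp.Equiv G G where
  toEquiv := f.toEquiv
  map_fun' := by
    intro n F args
    cases F with
    | mul => exact map_mul f _ _
    | inv => exact map_inv f _
    | one => exact map_one f
  map_rel' := by intro n r; exact r.elim

/-- The endomorphism of the free group sending `of j` to `w` and fixing other generators. -/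
def tw (j : ℕ) (w : FreeGroup ℕ) : FreeGroup ℕ →* FreeGroup ℕ :=
  FreeGroup.lift (fun k => if k = j then w else FreeGroup.of k)

@[simp] theorem tw_of_self (j : ℕ) (w : FreeGroup ℕ) : tw j w (FreeGroup.of j) = w := by
  simp [tw]

theorem tw_of_ne (j : ℕ) (w : FreeGroup ℕ) {k : ℕ} (h : k ≠ j) :
    tw j w (FreeGroup.of k) = FreeGroup.of k := by
  simp [tw, h]

/-- An automorphism of the free group from a pair of mutually inverse substitutions. -/
def twAut (j : ℕ) (w w' : FreeGroup ℕ) (h1 : tw j w' w = FreeGroup.of j)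
    (h2 : tw j w w' = FreeGroup.of j) : FreeGroup ℕ ≃* FreeGroup ℕ :=
  MulEquiv.mk ⟨tw j w, tw j w',
    fun x => by
      have : (tw j w').comp (tw j w) = MonoidHom.id _ := by
        apply FreeGroup.ext_hom
        intro a
        by_cases ha : a = j
        · subst ha; simpa using h1
        · simp [tw_of_ne j w ha, tw_of_ne j w' ha]
      exact DFunLike.congr_fun this x,
    fun x => by
      have : (tw j w).comp (tw j w') = MonoidHom.id _ := by
        apply FreeGroup.ext_hom
        intro a
        by_cases ha : a = j
        · subst ha; simpa using h2
        · simp [tw_of_ne j w ha, tw_of_ne j w' ha]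
      exact DFunLike.congr_fun this x⟩
    (map_mul (tw j w))

@[simp] theorem twAut_apply (j : ℕ) (w w' : FreeGroup ℕ) (h1 h2) (x : FreeGroup ℕ) :
    twAut j w w' h1 h2 x = tw j w x := rfl

theorem twAut_fixes (j : ℕ) (w w' : FreeGroup ℕ) (h1 h2) {k : ℕ} (h : k ≠ j) :
    twAut j w w' h1 h2 (FreeGroup.of k) = FreeGroup.of k := tw_of_ne j w h

/-- Every element of the free group has "support" bounded by some `N`: any endomorphism
fixing the first `N` generators fixes it. -/
theorem exists_support_bound (a : FreeGroup ℕ) :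
    ∃ N : ℕ, ∀ f : FreeGroup ℕ →* FreeGroup ℕ,
      (∀ k < N, f (FreeGroup.of k) = FreeGroup.of k) → f a = a := by
  induction a using FreeGroup.induction_on with
  | C1 => exact ⟨0, fun f _ => map_one f⟩
  | of x => exact ⟨x + 1, fun f hf => hf x (Nat.lt_succ_self x)⟩
  | inv_of x ih =>
    obtain ⟨N, hN⟩ := ih
    exact ⟨N, fun f hf => by rw [map_inv, hN f hf]⟩
  | mul x y ihx ihy =>
    obtain ⟨N1, h1⟩ := ihx
    obtain ⟨N2, h2⟩ := ihy
    refine ⟨max N1 N2, fun f hf => ?_⟩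
    rw [map_mul, h1 f (fun k hk => hf k (lt_of_lt_of_le hk (le_max_left _ _))),
      h2 f (fun k hk => hf k (lt_of_lt_of_le hk (le_max_right _ _)))]

/-- Fact 7.1 of the paper (Poizat): the free group is connected—it has no proper
definable (with parameters) subgroup of finite index. -/
theorem freeGroup_connected (H : Subgroup (FreeGroup ℕ)) (hfi : H.FiniteIndex)
    (hdef : Set.Definable₁ (Set.univ : Set (FreeGroup ℕ)) Lgrp (H : Set (FreeGroup ℕ))) :
    H = ⊤ := by
  classical
  -- reduce to finitely many parameters
  rw [Set.Definable₁, Set.definable_iff_finitely_definable] at hdef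
  obtain ⟨A0, -, hdef⟩ := hdef
  rw [Set.definable_iff_exists_formula_sum] at hdef
  obtain ⟨φ, hφ⟩ := hdef
  have hmem : ∀ x : FreeGroup ℕ,
      x ∈ H ↔ φ.Realize (Sum.elim (Subtype.val : {y // y ∈ (A0 : Set (FreeGroup ℕ))} → FreeGroup ℕ) (fun _ : Fin 1 => x)) := by
    intro x
    have := Set.ext_iff.1 hφ (fun _ : Fin 1 => x)
    simpa using this
  -- a bound on the generators appearing in the parameters
  obtain ⟨N, hN⟩ : ∃ N : ℕ, ∀ a ∈ A0, ∀ f : FreeGroup ℕ →* FreeGroup ℕ,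
      (∀ k < N, f (FreeGroup.of k) = FreeGroup.of k) → f a = a := by
    choose g hg using exists_support_bound
    exact ⟨A0.sup g, fun a ha f hf => hg a f fun k hk => hf k (lt_of_lt_of_le hk (Finset.le_sup ha))⟩
  -- invariance of `H` under automorphisms fixing the parameters
  have hinv : ∀ f : FreeGroup ℕ ≃* FreeGroup ℕ,
      (∀ a : {y // y ∈ (A0 : Set (FreeGroup ℕ))}, f a = a) → ∀ x : FreeGroup ℕ, x ∈ H ↔ f x ∈ H := by
    intro f hf x
    rw [hmem x, hmem (f x)]
    have hc : Sum.elim (Subtype.val : {y // y ∈ (A0 : Set (FreeGroup ℕ))} → FreeGroup ℕ) (fun _ : Fin 1 => f x)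
        = (mulEquivToLgrpEquiv f) ∘ Sum.elim Subtype.val (fun _ : Fin 1 => x) := by
      funext v
      cases v with
      | inl a => exact (hf a).symm
      | inr i => rfl
    rw [hc, FirstOrder.Language.StrongHomClass.realize_formula (mulEquivToLgrpEquiv f)]
  -- automorphisms fixing all generators except `j > N` fix the parameters
  have hfix : ∀ (f : FreeGroup ℕ ≃* FreeGroup ℕ) (j : ℕ), N < j →
      (∀ k ≠ j, f (FreeGroup.of k) = FreeGroup.of k) →
      ∀ x : FreeGroup ℕ, x ∈ H ↔ f x ∈ H := by
    intro f j hj hfk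
    refine hinv f fun a => hN a a.2 f.toMonoidHom fun k hk => hfk k ?_
    omega
  -- pigeonhole: two distinct fresh generators lie in the same left coset
  have : Finite (FreeGroup ℕ ⧸ H) := H.finite_quotient_of_finiteIndex
  obtain ⟨i, j, hij, hq⟩ := Finite.exists_ne_map_eq_of_infinite
    (fun k : ℕ => (QuotientGroup.mk (FreeGroup.of (N + 1 + k)) : FreeGroup ℕ ⧸ H))
  set a := N + 1 + i with ha
  set b := N + 1 + j with hb
  have hab : a ≠ b := by omega
  have hNa : N < a := by omega
  have hNb : N < b := by omega
  have hmemab : (FreeGroup.of a)⁻¹ * FreeGroup.of b ∈ H := (QuotientGroup.eq).1 hq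
  -- the Nielsen automorphism `of a ↦ of b * of a` sends this element to `(of a)⁻¹`
  have h1 : tw a ((FreeGroup.of b)⁻¹ * FreeGroup.of a) (FreeGroup.of b * FreeGroup.of a)
      = FreeGroup.of a := by
    rw [map_mul, tw_of_self, tw_of_ne a _ (Ne.symm hab), mul_inv_cancel_left]
  have h2 : tw a (FreeGroup.of b * FreeGroup.of a) ((FreeGroup.of b)⁻¹ * FreeGroup.of a)
      = FreeGroup.of a := by
    rw [map_mul, map_inv, tw_of_self, tw_of_ne a _ (Ne.symm hab), inv_mul_cancel_left]
  set f := twAut a (FreeGroup.of b * FreeGroup.of a) ((FreeGroup.of b)⁻¹ * FreeGroup.of a) h1 h2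
  have hfa : f ((FreeGroup.of a)⁻¹ * FreeGroup.of b) = (FreeGroup.of a)⁻¹ := by
    simp only [f, twAut_apply]
    rw [map_mul, map_inv, tw_of_self, tw_of_ne a _ (Ne.symm hab)]
    simp [mul_inv_rev, mul_assoc]
  have haH : FreeGroup.of a ∈ H := by
    have := (hfix f a hNa (fun k hk => twAut_fixes _ _ _ _ _ hk) _).1 hmemab
    rw [hfa] at this
    exact (inv_mem_iff).1 this
  -- now every generator lies in `H`
  have hgen : ∀ m : ℕ, FreeGroup.of m ∈ H := by
    intro m
    by_cases hma : m = a
    · exact hma ▸ haH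
    · have h1 : tw a ((FreeGroup.of m)⁻¹ * FreeGroup.of a) (FreeGroup.of m * FreeGroup.of a)
          = FreeGroup.of a := by
        rw [map_mul, tw_of_self, tw_of_ne a _ hma, mul_inv_cancel_left]
      have h2 : tw a (FreeGroup.of m * FreeGroup.of a) ((FreeGroup.of m)⁻¹ * FreeGroup.of a)
          = FreeGroup.of a := by
        rw [map_mul, map_inv, tw_of_self, tw_of_ne a _ hma, inv_mul_cancel_left]
      set g := twAut a (FreeGroup.of m * FreeGroup.of a) ((FreeGroup.of m)⁻¹ * FreeGroup.of a)
        h1 h2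
      have hga : g (FreeGroup.of a) = FreeGroup.of m * FreeGroup.of a := tw_of_self _ _
      have : FreeGroup.of m * FreeGroup.of a ∈ H := by
        have := (hfix g a hNa (fun k hk => twAut_fixes _ _ _ _ _ hk) _).1 haH
        rwa [hga] at this
      have := mul_mem this (inv_mem haH)
      simpa using this
  -- conclude
  rw [eq_top_iff]
  intro x _
  induction x using FreeGroup.induction_on with
  | C1 => exact one_mem H
  | of k => exact hgen k
  | inv_of k _ => exact inv_mem (hgen k)
  | mul x y hx hy => exact mul_mem (hx trivial) (hy trivial)
end
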